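/- arXiv:0705.3820 — 3 statements merged into one kernel-verified Lean document; each statement's English description precedes it below -/
import Mathlib

section
/- If a and b realize the diameter of a finite point set S ⊂ ℝ² (no three points collinear) and r ∈ S \ {a,b}, then the angle ∠arb at r is at least π/3. -/
/-! By the law of cosines, `2 |ra| |rb| cos ∠arb = |ra|² + |rb|² - |ab|²`. Since `|ab|` is the
largest of the three sides, the right-hand side is at most `|ra| |rb|`, so `cos ∠arb ≤ 1/2`. -/

open EuclideanGeometry

abbrev Pt := EuclideanSpace ℝ (Fin 2)

/-- No three points of `S` are collinear. -/
def GenPos (S : Finset Pt) : Prop :=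
  ∀ p ∈ S, ∀ q ∈ S, ∀ r ∈ S, p ≠ q → p ≠ r → q ≠ r →
    ¬ Collinear ℝ ({p, q, r} : Set Pt)

theorem sq_add_sq_sub_mul_le_sq_of_le {x y d : ℝ} (hx : 0 ≤ x) (hy : 0 ≤ y) (hxd : x ≤ d)
    (hyd : y ≤ d) : x ^ 2 + y ^ 2 - x * y ≤ d ^ 2 := by
  rcases le_total x y with hxy | hyx
  · nlinarith [mul_le_mul_of_nonneg_left hxy hx]
  · nlinarith [mul_le_mul_of_nonneg_left hyx hy]

namespace EuclideanGeometry

variable {V P : Type*} [NormedAddCommGroup V] [InnerProductSpace ℝ V] [MetricSpace P]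
  [NormedAddTorsor V P]

theorem cos_angle_le_one_half_of_dist_le {a b r : P} (hra : r ≠ a) (hrb : r ≠ b)
    (had : dist r a ≤ dist a b) (hbd : dist r b ≤ dist a b) : Real.cos (∠ a r b) ≤ 1 / 2 := by
  have hpos : 0 < dist r a * dist r b := mul_pos (dist_pos.mpr hra) (dist_pos.mpr hrb)
  have hlaw := law_cos a r b
  rw [dist_comm a r, dist_comm b r] at hlaw
  have hcore := sq_add_sq_sub_mul_le_sq_of_le dist_nonneg dist_nonneg had hbd
  nlinarith

theorem pi_div_three_le_angle_of_dist_le {a b r : P} (hra : r ≠ a) (hrb : r ≠ b)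
    (had : dist r a ≤ dist a b) (hbd : dist r b ≤ dist a b) : Real.pi / 3 ≤ ∠ a r b := by
  by_contra! hlt
  have hcos := Real.cos_lt_cos_of_nonneg_of_le_pi (angle_nonneg a r b)
    (by linarith [Real.pi_pos]) hlt
  rw [Real.cos_pi_div_three] at hcos
  linarith [cos_angle_le_one_half_of_dist_le hra hrb had hbd]

end EuclideanGeometry

theorem stmt2_general (S : Finset Pt) (a b r : Pt)
    (ha : a ∈ S) (hb : b ∈ S) (hr : r ∈ S)
    (hdiam : ∀ x ∈ S, ∀ y ∈ S, dist x y ≤ dist a b)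
    (hra : r ≠ a) (hrb : r ≠ b) :
    Real.pi / 3 ≤ ∠ a r b :=
  pi_div_three_le_angle_of_dist_le hra hrb (hdiam r hr a ha) (hdiam r hr b hb)

/-- If `a` and `b` realize the diameter of a finite point set `S` in general position
and `r ∈ S \ {a, b}`, then the angle `∠ a r b` is at least `π / 3`. -/
theorem stmt2 (S : Finset Pt) (hgp : GenPos S) (a b r : Pt)
    (ha : a ∈ S) (hb : b ∈ S) (hr : r ∈ S) (hab : a ≠ b)
    (hdiam : ∀ x ∈ S, ∀ y ∈ S, dist x y ≤ dist a b)
    (hra : r ≠ a) (hrb : r ≠ b) :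
    Real.pi / 3 ≤ ∠ a r b :=
  stmt2_general S a b r ha hb hr hdiam hra hrb
end

section
/- For every n there exists a point set S of n points in general position such that every triangulation T of S has some vertex p with maximum incident angle at most 2π/3 + ε (for any prescribed ε > 0); hence the bound 2π/3 for triangulations is tight. -/
open scoped Classical
open EuclideanGeometry

noncomputable section

/-- A plane straight-line graph on the finite point set `S`: vertices are points of `S`,
edges are recorded as ordered pairs closed under swapping, and two edges that are not
the same unordered pair may only meet at common endpoints. -/
structure PSLG (S : Finset Pt) where
  E : Finset (Pt × Pt)
  symm : ∀ e ∈ E, (e.2, e.1) ∈ E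
  endpts : ∀ e ∈ E, e.1 ∈ S ∧ e.2 ∈ S
  ne : ∀ e ∈ E, e.1 ≠ e.2
  noncross : ∀ e ∈ E, ∀ f ∈ E, e ≠ f → e ≠ (f.2, f.1) →
    ∀ x, x ∈ segment ℝ e.1 e.2 → x ∈ segment ℝ f.1 f.2 →
      (x = e.1 ∨ x = e.2) ∧ (x = f.1 ∨ x = f.2)

/-- The degree of the point `p` in `G`. -/
def PSLG.deg {S : Finset Pt} (G : PSLG S) (p : Pt) : ℕ :=
  (G.E.filter fun e => e.1 = p).card

/-- The point `p` has an incident angle of size at least `φ` in `G`: all edge directions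
at `p` fit in a closed cone of half-angle `π - φ / 2` (for `p` of degree ≤ 1 the maximum
incident angle is `2π`, and this condition holds trivially). -/
def VertexOpen {S : Finset Pt} (G : PSLG S) (p : Pt) (φ : ℝ) : Prop :=
  ∃ d : Pt, d ≠ 0 ∧ ∀ q : Pt, (p, q) ∈ G.E →
    InnerProductGeometry.angle d (q - p) ≤ Real.pi - φ / 2

/-- `G` is `φ`-open: every vertex has an incident angle of size at least `φ`. -/
def PSLG.IsPhiOpen {S : Finset Pt} (G : PSLG S) (φ : ℝ) : Prop :=
  ∀ p ∈ S, VertexOpen G p φ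

/-- `G` is connected on `S`. -/
def PSLG.Connected {S : Finset Pt} (G : PSLG S) : Prop :=
  ∀ p ∈ S, ∀ q ∈ S, Relation.ReflTransGen (fun a b => (a, b) ∈ G.E) p q

/-- `G` is a spanning tree of `S`: connected and with the minimum possible number of
edges (each undirected edge is recorded twice). -/
def PSLG.IsSpanningTree {S : Finset Pt} (G : PSLG S) : Prop :=
  G.Connected ∧ G.E.card = 2 * (S.card - 1)

/-- `G` is a (non-crossing Hamiltonian) spanning path of `S`: a spanning tree of maximum
vertex degree at most two. -/
def PSLG.IsSpanningPath {S : Finset Pt} (G : PSLG S) : Prop :=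
  G.IsSpanningTree ∧ ∀ p ∈ S, G.deg p ≤ 2

/-- `S` is in convex position. -/
def ConvexPos (S : Finset Pt) : Prop :=
  ∀ p ∈ S, p ∉ convexHull ℝ (↑(S.erase p) : Set Pt)

/-- `G` is a triangulation of `S`: a maximal plane straight-line graph, i.e. any further
edge between points of `S` would cross the existing graph. -/
def PSLG.IsTriangulation {S : Finset Pt} (G : PSLG S) : Prop :=
  ∀ p ∈ S, ∀ q ∈ S, p ≠ q → (p, q) ∉ G.E →
    ∃ e ∈ G.E, ∃ x, x ∈ segment ℝ p q ∧ x ∈ segment ℝ e.1 e.2 ∧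
      ¬((x = p ∨ x = q) ∧ (x = e.1 ∨ x = e.2))

end

/-!
For every `d ≠ 0` one of the three cube roots of unity `u ∈ {1, ω, ω²}` satisfies
`⟪d, u⟫ ≤ -‖d‖ / 2`: writing `d = (x, y)` and `r = ‖d‖`, the product of the three numbers
`⟪d, u⟫ + r / 2` equals `(2x + r)² (x - r) / 4 ≤ 0`. So a vertex adjacent to `1, ω, ω²` cannot
have all its edge directions in a cone of half-angle less than `2π / 3`.

The point set is the origin, `ω`, `ω²` and `n - 3` points `(1 + s, s²)`, `0 ≤ s ≤ 1/8`, of a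
parabola through `1`. Three points of a parabola are never collinear, and the remaining triples
are checked by their signed areas. For `u ∈ {1, ω, ω²}`, every segment between two points of the
set other than `0` and `u` is separated from `[0, u]` by a line. Since a triangulation is a
maximal plane graph and the set is in general position, it contains the three edges `[0, u]`.
-/

open scoped RealInnerProductSpace
open Real

section General

variable {E : Type*}

theorem eq_of_mem_segment_of_not_collinear [AddCommGroup E] [Module ℝ E] {p q v x : E}
    (h : ¬ Collinear ℝ ({p, q, v} : Set E)) (hq : x ∈ segment ℝ p q) (hv : x ∈ segment ℝ p v) :
    x = p := by
  by_contra hxp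
  have hpxq := (mem_segment_iff_wbtw.1 hq).collinear
  have hpxv := (mem_segment_iff_wbtw.1 hv).collinear
  exact h <| collinear_triple_of_mem_affineSpan_pair (left_mem_affineSpan_pair ℝ p x)
    (hpxq.mem_affineSpan_of_mem_of_ne (by simp) (by simp) (by simp) (Ne.symm hxp))
    (hpxv.mem_affineSpan_of_mem_of_ne (by simp) (by simp) (by simp) (Ne.symm hxp))

variable [NormedAddCommGroup E] [InnerProductSpace ℝ E]

theorem disjoint_segment_of_inner_lt {p q u v : E} (w : E) (c : ℝ) (hp : ⟪w, p⟫ < c)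
    (hq : ⟪w, q⟫ < c) (hu : c < ⟪w, u⟫) (hv : c < ⟪w, v⟫) :
    Disjoint (segment ℝ p q) (segment ℝ u v) :=
  Set.disjoint_left.2 fun x hpq huv => by
    have hlt : ⟪w, x⟫ < c := (convex_halfSpace_lt (innerₗ E w).isLinear c).segment_subset hp hq hpq
    have hgt : c < ⟪w, x⟫ := (convex_halfSpace_gt (innerₗ E w).isLinear c).segment_subset hu hv huv
    exact lt_asymm hlt hgt

theorem two_pi_div_three_le_angle {d u : E} (hd : d ≠ 0) (hu : u ≠ 0)
    (h : ⟪d, u⟫ ≤ -(‖d‖ * ‖u‖) / 2) : 2 * π / 3 ≤ InnerProductGeometry.angle d u := by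
  by_contra! hlt
  have hcos : Real.cos (2 * π / 3) = -(1 / 2) := by
    rw [show 2 * π / 3 = π - π / 3 by ring, Real.cos_pi_sub, Real.cos_pi_div_three]
  have hlt' := Real.cos_lt_cos_of_nonneg_of_le_pi (InnerProductGeometry.angle_nonneg d u)
    (by linarith [Real.pi_pos]) hlt
  rw [hcos, InnerProductGeometry.cos_angle, lt_div_iff₀ (by positivity)] at hlt'
  linarith

end General

theorem GenPos.insert {S : Finset Pt} {p : Pt} (hS : GenPos S)
    (hp : ∀ q ∈ S, ∀ r ∈ S, p ≠ q → p ≠ r → q ≠ r → ¬ Collinear ℝ ({p, q, r} : Set Pt)) :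
    GenPos (insert p S) := by
  intro a ha b hb c hc hab hac hbc
  rw [Finset.mem_insert] at ha hb hc
  rcases ha with rfl | ha <;> rcases hb with rfl | hb <;> rcases hc with rfl | hc
  all_goals first
    | contradiction
    | exact hS a ha b hb c hc hab hac hbc
    | exact hp b hb c hc hab hac hbc
    | (rw [Set.insert_comm]; exact hp a ha c hc hab.symm hbc hac)
    | (rw [Set.pair_comm, Set.insert_comm]; exact hp a ha b hb hac.symm hbc.symm hab)

theorem PSLG.IsTriangulation.mem_E_of_disjoint {S : Finset Pt} {T : PSLG S}
    (hT : T.IsTriangulation) (hS : GenPos S) {p q : Pt} (hp : p ∈ S) (hq : q ∈ S) (hpq : p ≠ q)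
    (hdisj : ∀ u ∈ S \ {p, q}, ∀ v ∈ S \ {p, q}, u ≠ v →
      Disjoint (segment ℝ p q) (segment ℝ u v)) :
    (p, q) ∈ T.E := by
  have shared : ∀ {u v x : Pt}, u = p ∨ u = q → v ∈ S → v ≠ p → v ≠ q →
      x ∈ segment ℝ p q → x ∈ segment ℝ u v → x = u := by
    rintro u v x (rfl | rfl) hv hvp hvq hxpq hxuv
    · exact eq_of_mem_segment_of_not_collinear (hS u hp q hq v hv hpq (Ne.symm hvp) (Ne.symm hvq))
        hxpq hxuv
    · rw [segment_symm] at hxpq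
      exact eq_of_mem_segment_of_not_collinear
        (hS u hq p hp v hv hpq.symm (Ne.symm hvq) (Ne.symm hvp)) hxpq hxuv
  by_contra hE
  obtain ⟨⟨u, v⟩, he, x, hxpq, hxuv, hx⟩ := hT p hp q hq hpq hE
  obtain ⟨hu, hv⟩ := T.endpts _ he
  have huv : u ≠ v := T.ne _ he
  by_cases hu' : u = p ∨ u = q <;> by_cases hv' : v = p ∨ v = q
  · rcases hu' with rfl | rfl <;> rcases hv' with rfl | rfl
    exacts [huv rfl, hE he, hE (T.symm _ he), huv rfl]
  · obtain ⟨hvp, hvq⟩ := not_or.1 hv'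
    have hxu := shared hu' hv hvp hvq hxpq hxuv
    exact hx ⟨hxu ▸ hu', Or.inl hxu⟩
  · obtain ⟨hup, huq⟩ := not_or.1 hu'
    rw [segment_symm] at hxuv
    have hxv := shared hv' hu hup huq hxpq hxuv
    exact hx ⟨hxv ▸ hv', Or.inr hxv⟩
  · exact Set.disjoint_left.1 (hdisj u (by simp [hu, hu']) v (by simp [hv, hv']) huv) hxpq hxuv

theorem PSLG.IsTriangulation.mem_E_of_inner_lt {S : Finset Pt} {T : PSLG S}
    (hT : T.IsTriangulation) (hS : GenPos S) {p q : Pt} (hp : p ∈ S) (hq : q ∈ S) (hpq : p ≠ q)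
    (w : Pt) (c : ℝ) (hpw : ⟪w, p⟫ < c) (hqw : ⟪w, q⟫ < c) (hw : ∀ u ∈ S \ {p, q}, c < ⟪w, u⟫) :
    (p, q) ∈ T.E :=
  hT.mem_E_of_disjoint hS hp hq hpq fun u hu v hv _ =>
    disjoint_segment_of_inner_lt w c hpw hqw (hw u hu) (hw v hv)

theorem inner_eq_fin_two (x y : Pt) : ⟪x, y⟫ = x 0 * y 0 + x 1 * y 1 := by
  simp [PiLp.inner_apply, Fin.sum_univ_two]; ring

theorem norm_sq_eq_fin_two (x : Pt) : ‖x‖ ^ 2 = x 0 ^ 2 + x 1 ^ 2 := by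
  simp [EuclideanSpace.norm_sq_eq, Fin.sum_univ_two]

def orient (u v w : Pt) : ℝ :=
  (v 0 - u 0) * (w 1 - u 1) - (v 1 - u 1) * (w 0 - u 0)

theorem orient_swap (u v w : Pt) : orient u w v = -orient u v w := by
  unfold orient; ring

theorem not_collinear_of_orient_ne_zero {u v w : Pt} (h : orient u v w ≠ 0) :
    ¬ Collinear ℝ ({u, v, w} : Set Pt) := by
  rw [collinear_iff_of_mem (Set.mem_insert u _)]
  rintro ⟨r, hr⟩
  obtain ⟨a, rfl⟩ := hr v (by simp)
  obtain ⟨b, rfl⟩ := hr w (by simp)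
  apply h
  simp only [orient, vadd_eq_add, PiLp.add_apply, PiLp.smul_apply, smul_eq_mul]
  ring

theorem not_collinear_of_orient_ne_zero' {u v w : Pt} (h : orient u v w ≠ 0) :
    ¬ Collinear ℝ ({u, w, v} : Set Pt) :=
  not_collinear_of_orient_ne_zero (by rwa [orient_swap, neg_ne_zero])

theorem sqrt_three_gt : (8 / 5 : ℝ) < √3 := by
  rw [Real.lt_sqrt (by norm_num)]; norm_num

noncomputable def upperRoot : Pt := !₂[-1 / 2, √3 / 2]

noncomputable def lowerRoot : Pt := !₂[-1 / 2, -(√3 / 2)]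

def cubeRoots : Set Pt := {!₂[1, 0], upperRoot, lowerRoot}

theorem norm_of_mem_cubeRoots {u : Pt} (hu : u ∈ cubeRoots) : ‖u‖ = 1 := by
  have h3 : √3 ^ 2 = 3 := Real.sq_sqrt (by norm_num)
  rw [← pow_eq_one_iff_of_nonneg (norm_nonneg u) two_ne_zero, norm_sq_eq_fin_two]
  simp only [cubeRoots, Set.mem_insert_iff, Set.mem_singleton_iff] at hu
  rcases hu with rfl | rfl | rfl <;> simp [upperRoot, lowerRoot] <;> nlinarith

theorem exists_inner_le_neg_half (d : Pt) : ∃ u ∈ cubeRoots, ⟪d, u⟫ ≤ -‖d‖ / 2 := by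
  by_contra! h
  simp only [cubeRoots, Set.mem_insert_iff, Set.mem_singleton_iff, forall_eq_or_imp,
    forall_eq] at h
  obtain ⟨h1, hB, hC⟩ := h
  simp only [inner_eq_fin_two, upperRoot, lowerRoot, Matrix.cons_val_zero, Matrix.cons_val_one,
    mul_one, mul_zero, add_zero] at h1 hB hC
  set x := d 0
  set y := d 1
  set r := ‖d‖
  have hr : r ^ 2 = x ^ 2 + y ^ 2 := norm_sq_eq_fin_two d
  have h3 : √3 ^ 2 = 3 := Real.sq_sqrt (by norm_num)
  have hxr : x ≤ r := by nlinarith [norm_nonneg d]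
  have hpos : 0 < (2 * x + r) ^ 2 * (x - r) / 4 := calc
    0 < (x + r / 2) * (-x / 2 + √3 / 2 * y + r / 2) * (-x / 2 - √3 / 2 * y + r / 2) :=
      mul_pos (mul_pos (by linarith) (by linarith)) (by linarith)
    _ = (2 * x + r) ^ 2 * (x - r) / 4 := by
      linear_combination (-(1 / 4) * (x + r / 2) * y ^ 2) * h3 + (3 / 4 * (x + r / 2)) * hr
  nlinarith [sq_nonneg (2 * x + r)]

theorem exists_two_pi_div_three_le_angle {d : Pt} (hd : d ≠ 0) :
    ∃ u ∈ cubeRoots, 2 * π / 3 ≤ InnerProductGeometry.angle d u := by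
  obtain ⟨u, hu, hdu⟩ := exists_inner_le_neg_half d
  have hu1 := norm_of_mem_cubeRoots hu
  refine ⟨u, hu, two_pi_div_three_le_angle hd (norm_ne_zero_iff.1 (by simp [hu1])) ?_⟩
  rwa [hu1, mul_one]

def parabolaPt (s : ℝ) : Pt := !₂[1 + s, s ^ 2]

theorem parabolaPt_zero : parabolaPt 0 = !₂[1, 0] := by
  simp [parabolaPt]

theorem parabolaPt_apply_one_pos {s : ℝ} (hs : s ≠ 0) : 0 < parabolaPt s 1 := by
  simp only [parabolaPt, PiLp.toLp_apply, Matrix.cons_val_one, Matrix.cons_val_zero]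
  positivity

theorem parabolaPt_injective : Function.Injective parabolaPt := fun a b h => by
  simpa [parabolaPt] using congrArg (· 0) h

theorem orient_parabolaPt (x : Pt) (a b : ℝ) :
    orient x (parabolaPt a) (parabolaPt b) = (b - a) * ((1 - x 0) * (a + b) + a * b + x 1) := by
  simp [orient, parabolaPt]; ring

theorem orient_parabolaPt_parabolaPt (a b c : ℝ) :
    orient (parabolaPt a) (parabolaPt b) (parabolaPt c) = (b - a) * (c - a) * (c - b) := by
  simp [orient, parabolaPt]; ring

theorem orient_ne_zero_of_chord {x : Pt} {a b : ℝ} (hab : parabolaPt a ≠ parabolaPt b)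
    (h : (1 - x 0) * (a + b) + a * b + x 1 ≠ 0) : orient x (parabolaPt a) (parabolaPt b) ≠ 0 := by
  rw [orient_parabolaPt]
  exact mul_ne_zero (sub_ne_zero.2 (ne_of_apply_ne _ hab).symm) h

theorem genPos_image_parabolaPt (P : Finset ℝ) : GenPos (P.image parabolaPt) := by
  simp only [GenPos, Finset.mem_image]
  rintro _ ⟨a, -, rfl⟩ _ ⟨b, -, rfl⟩ _ ⟨c, -, rfl⟩ hab hac hbc
  apply not_collinear_of_orient_ne_zero
  rw [orient_parabolaPt_parabolaPt]
  rw [parabolaPt_injective.ne_iff] at hab hac hbc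
  exact mul_ne_zero (mul_ne_zero (sub_ne_zero.2 hab.symm) (sub_ne_zero.2 hac.symm))
    (sub_ne_zero.2 hbc.symm)

noncomputable def config (P : Finset ℝ) : Finset Pt :=
  insert 0 (insert upperRoot (insert lowerRoot (P.image parabolaPt)))

theorem zero_mem_config (P : Finset ℝ) : (0 : Pt) ∈ config P := by
  simp [config]

theorem parabolaPt_mem_config {P : Finset ℝ} {s : ℝ} (hs : s ∈ P) : parabolaPt s ∈ config P := by
  simp only [config, Finset.mem_insert, Finset.mem_image]
  exact Or.inr (Or.inr (Or.inr ⟨s, hs, rfl⟩))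

theorem card_config {P : Finset ℝ} (hP : ∀ s ∈ P, 0 ≤ s) : (config P).card = P.card + 3 := by
  have h3 := sqrt_three_gt
  have hfar : ∀ u ∈ P.image parabolaPt, 1 ≤ u 0 := by
    simp only [Finset.mem_image]
    rintro _ ⟨s, hs, rfl⟩
    simp [parabolaPt, hP s hs]
  have hC : lowerRoot ∉ P.image parabolaPt := fun h => by
    have := hfar _ h
    norm_num [lowerRoot] at this
  have hB : upperRoot ∉ insert lowerRoot (P.image parabolaPt) := by
    simp only [Finset.mem_insert, not_or]
    refine ⟨ne_of_apply_ne (· 1) (by norm_num [upperRoot, lowerRoot]; linarith), fun h => ?_⟩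
    have := hfar _ h
    norm_num [upperRoot] at this
  have h0 : (0 : Pt) ∉ insert upperRoot (insert lowerRoot (P.image parabolaPt)) := by
    simp only [Finset.mem_insert, not_or]
    refine ⟨ne_of_apply_ne (· 0) (by norm_num [upperRoot]),
      ne_of_apply_ne (· 0) (by norm_num [lowerRoot]), fun h => ?_⟩
    have := hfar _ h
    norm_num at this
  rw [config, Finset.card_insert_of_notMem h0, Finset.card_insert_of_notMem hB,
    Finset.card_insert_of_notMem hC, Finset.card_image_of_injective _ parabolaPt_injective]

theorem orient_upperRoot_lowerRoot_parabolaPt (a : ℝ) :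
    orient upperRoot lowerRoot (parabolaPt a) = √3 * (3 / 2 + a) := by
  simp only [orient, upperRoot, lowerRoot, parabolaPt, PiLp.toLp_apply, Matrix.cons_val_zero,
    Matrix.cons_val_one]
  ring

theorem orient_zero_upperRoot_parabolaPt (a : ℝ) :
    orient 0 upperRoot (parabolaPt a) = -(√3 / 2 * (1 + a) + a ^ 2 / 2) := by
  simp only [orient, upperRoot, parabolaPt, PiLp.toLp_apply, PiLp.zero_apply,
    Matrix.cons_val_zero, Matrix.cons_val_one]
  ring

theorem orient_zero_lowerRoot_parabolaPt (a : ℝ) :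
    orient 0 lowerRoot (parabolaPt a) = √3 / 2 * (1 + a) - a ^ 2 / 2 := by
  simp only [orient, lowerRoot, parabolaPt, PiLp.toLp_apply, PiLp.zero_apply,
    Matrix.cons_val_zero, Matrix.cons_val_one]
  ring

theorem orient_zero_upperRoot_lowerRoot : orient 0 upperRoot lowerRoot = √3 / 2 := by
  simp only [orient, upperRoot, lowerRoot, PiLp.toLp_apply, PiLp.zero_apply,
    Matrix.cons_val_zero, Matrix.cons_val_one]
  ring

theorem genPos_insert_lowerRoot {P : Finset ℝ} (hP : ∀ s ∈ P, s ∈ Set.Icc (0 : ℝ) (1 / 8)) :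
    GenPos (insert lowerRoot (P.image parabolaPt)) := by
  have h3 := sqrt_three_gt
  refine (genPos_image_parabolaPt P).insert ?_
  simp only [Finset.mem_image]
  rintro _ ⟨a, ha, rfl⟩ _ ⟨b, hb, rfl⟩ - - hab
  obtain ⟨ha0, ha1⟩ := hP a ha
  obtain ⟨hb0, hb1⟩ := hP b hb
  refine not_collinear_of_orient_ne_zero (orient_ne_zero_of_chord hab ?_)
  simp only [lowerRoot, PiLp.toLp_apply, Matrix.cons_val_zero, Matrix.cons_val_one]
  nlinarith

theorem genPos_insert_upperRoot {P : Finset ℝ} (hP : ∀ s ∈ P, s ∈ Set.Icc (0 : ℝ) (1 / 8)) :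
    GenPos (insert upperRoot (insert lowerRoot (P.image parabolaPt))) := by
  have h3 := sqrt_three_gt
  refine (genPos_insert_lowerRoot hP).insert ?_
  simp only [Finset.mem_insert, Finset.mem_image]
  rintro _ (rfl | ⟨a, ha, rfl⟩) _ (rfl | ⟨b, hb, rfl⟩) - - hqr
  · exact absurd rfl hqr
  · refine not_collinear_of_orient_ne_zero ?_
    rw [orient_upperRoot_lowerRoot_parabolaPt]
    nlinarith [(hP b hb).1]
  · refine not_collinear_of_orient_ne_zero' ?_
    rw [orient_upperRoot_lowerRoot_parabolaPt]
    nlinarith [(hP a ha).1]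
  · obtain ⟨ha0, -⟩ := hP a ha
    obtain ⟨hb0, -⟩ := hP b hb
    refine not_collinear_of_orient_ne_zero (orient_ne_zero_of_chord hqr ?_)
    simp only [upperRoot, PiLp.toLp_apply, Matrix.cons_val_zero, Matrix.cons_val_one]
    nlinarith

theorem genPos_config {P : Finset ℝ} (hP : ∀ s ∈ P, s ∈ Set.Icc (0 : ℝ) (1 / 8)) :
    GenPos (config P) := by
  have h3 := sqrt_three_gt
  refine (genPos_insert_upperRoot hP).insert ?_
  simp only [Finset.mem_insert, Finset.mem_image]
  rintro _ (rfl | rfl | ⟨a, ha, rfl⟩) _ (rfl | rfl | ⟨b, hb, rfl⟩) - - hqr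
  · exact absurd rfl hqr
  · exact not_collinear_of_orient_ne_zero (by rw [orient_zero_upperRoot_lowerRoot]; positivity)
  · refine not_collinear_of_orient_ne_zero ?_
    rw [orient_zero_upperRoot_parabolaPt]
    nlinarith [(hP b hb).1]
  · exact not_collinear_of_orient_ne_zero' (by rw [orient_zero_upperRoot_lowerRoot]; positivity)
  · exact absurd rfl hqr
  · refine not_collinear_of_orient_ne_zero ?_
    rw [orient_zero_lowerRoot_parabolaPt]
    nlinarith [(hP b hb).1, (hP b hb).2]
  · refine not_collinear_of_orient_ne_zero' ?_
    rw [orient_zero_upperRoot_parabolaPt]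
    nlinarith [(hP a ha).1]
  · refine not_collinear_of_orient_ne_zero' ?_
    rw [orient_zero_lowerRoot_parabolaPt]
    nlinarith [(hP a ha).1, (hP a ha).2]
  · obtain ⟨ha0, -⟩ := hP a ha
    obtain ⟨hb0, -⟩ := hP b hb
    refine not_collinear_of_orient_ne_zero (orient_ne_zero_of_chord hqr ?_)
    simp only [PiLp.zero_apply]
    rcases (ne_of_apply_ne _ hqr).lt_or_gt with h | h <;> nlinarith

/-- The chord from `ω²` to a parabola point `(1 + s, s²)`, `s > 0`, crosses the x-axis to the right
of `1`, which is why the separating line depends on `s`. -/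
theorem disjoint_segment_zero_parabolaPt_zero_lowerRoot {P : Finset ℝ}
    (hP : ∀ s ∈ P, s ∈ Set.Icc (0 : ℝ) (1 / 8)) {v : Pt} (hv : v ∈ config P \ {0, parabolaPt 0})
    (hvC : v ≠ lowerRoot) : Disjoint (segment ℝ 0 (parabolaPt 0)) (segment ℝ lowerRoot v) := by
  have h3 := sqrt_three_gt
  simp only [config, Finset.mem_sdiff, Finset.mem_insert, Finset.mem_singleton,
    Finset.mem_image] at hv
  obtain ⟨rfl | rfl | rfl | ⟨s, hs, rfl⟩, hv0⟩ := hv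
  · exact absurd rfl (hv0 ∘ Or.inl)
  · refine disjoint_segment_of_inner_lt !₂[-1, 0] (1 / 4) ?_ ?_ ?_ ?_ <;>
      norm_num [inner_eq_fin_two, upperRoot, lowerRoot, parabolaPt]
  · exact absurd rfl hvC
  · have hs0 : 0 < s := lt_of_le_of_ne (hP s hs).1 fun h => hv0 (Or.inr (by rw [h]))
    have hs1 := (hP s hs).2
    refine disjoint_segment_of_inner_lt !₂[1, -2] (1 + s / 2) ?_ ?_ ?_ ?_ <;>
      simp [inner_eq_fin_two, lowerRoot, parabolaPt] <;> nlinarith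

theorem PSLG.IsTriangulation.zero_parabolaPt_zero_mem_E {P : Finset ℝ}
    (hP : ∀ s ∈ P, s ∈ Set.Icc (0 : ℝ) (1 / 8)) (hP0 : 0 ∈ P) {T : PSLG (config P)}
    (hT : T.IsTriangulation) : (0, parabolaPt 0) ∈ T.E := by
  have upper : ∀ u ∈ config P \ {0, parabolaPt 0}, u ≠ lowerRoot → 0 < u 1 := by
    intro u hu huC
    simp only [config, Finset.mem_sdiff, Finset.mem_insert, Finset.mem_singleton,
      Finset.mem_image] at hu
    obtain ⟨rfl | rfl | rfl | ⟨s, hs, rfl⟩, hu0⟩ := hu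
    · exact absurd rfl (hu0 ∘ Or.inl)
    · simp [upperRoot]
    · exact absurd rfl huC
    · exact parabolaPt_apply_one_pos fun h => hu0 (Or.inr (by rw [h]))
  refine hT.mem_E_of_disjoint (genPos_config hP) (zero_mem_config P) (parabolaPt_mem_config hP0) ?_
    fun u hu v hv huv => ?_
  · exact ne_of_apply_ne (· 0) (by norm_num [parabolaPt])
  by_cases huC : u = lowerRoot
  · exact huC ▸ disjoint_segment_zero_parabolaPt_zero_lowerRoot hP hv (huC ▸ huv.symm)
  by_cases hvC : v = lowerRoot
  · rw [segment_symm ℝ u]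
    exact hvC ▸ disjoint_segment_zero_parabolaPt_zero_lowerRoot hP hu (hvC ▸ huv)
  have hmin : 0 < min (u 1) (v 1) := lt_min (upper u hu huC) (upper v hv hvC)
  refine disjoint_segment_of_inner_lt !₂[0, 1] (min (u 1) (v 1) / 2) ?_ ?_ ?_ ?_ <;>
    simp only [inner_eq_fin_two, parabolaPt, PiLp.zero_apply,
      Matrix.cons_val_zero, Matrix.cons_val_one] <;>
    linarith [min_le_left (u 1) (v 1), min_le_right (u 1) (v 1)]

theorem PSLG.IsTriangulation.zero_cubeRoots_mem_E {P : Finset ℝ}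
    (hP : ∀ s ∈ P, s ∈ Set.Icc (0 : ℝ) (1 / 8)) (hP0 : 0 ∈ P) {T : PSLG (config P)}
    (hT : T.IsTriangulation) : ∀ u ∈ cubeRoots, (0, u) ∈ T.E := by
  have h3 := sqrt_three_gt
  have hS := genPos_config hP
  simp only [cubeRoots, Set.mem_insert_iff, Set.mem_singleton_iff]
  rintro u (rfl | rfl | rfl)
  · exact parabolaPt_zero ▸ hT.zero_parabolaPt_zero_mem_E hP hP0
  · refine hT.mem_E_of_inner_lt hS (zero_mem_config P) (by simp [config])
      (ne_of_apply_ne (· 0) (by norm_num [upperRoot])) !₂[1, -1] (1 / 4)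
      (by simp) (by simp [inner_eq_fin_two, upperRoot]; linarith) ?_
    intro v hv
    simp only [config, Finset.mem_sdiff, Finset.mem_insert, Finset.mem_singleton,
      Finset.mem_image] at hv
    obtain ⟨rfl | rfl | rfl | ⟨s, hs, rfl⟩, hv0⟩ := hv
    · exact absurd rfl (hv0 ∘ Or.inl)
    · exact absurd rfl (hv0 ∘ Or.inr)
    · simp [inner_eq_fin_two, lowerRoot]; linarith
    · simp [inner_eq_fin_two, parabolaPt]; nlinarith [(hP s hs).1, (hP s hs).2]
  · refine hT.mem_E_of_inner_lt hS (zero_mem_config P) (by simp [config])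
      (ne_of_apply_ne (· 0) (by norm_num [lowerRoot])) !₂[1, 1] (1 / 4)
      (by simp) (by simp [inner_eq_fin_two, lowerRoot]; linarith) ?_
    intro v hv
    simp only [config, Finset.mem_sdiff, Finset.mem_insert, Finset.mem_singleton,
      Finset.mem_image] at hv
    obtain ⟨rfl | rfl | rfl | ⟨s, hs, rfl⟩, hv0⟩ := hv
    · exact absurd rfl (hv0 ∘ Or.inl)
    · simp [inner_eq_fin_two, upperRoot]; linarith
    · exact absurd rfl (hv0 ∘ Or.inr)
    · simp [inner_eq_fin_two, parabolaPt]; nlinarith [(hP s hs).1, (hP s hs).2]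

/-- For every `ε > 0` and every `n ≥ 4` there is a set of `n` points in general position
such that every triangulation has a vertex whose maximum incident angle is at most
`2π/3 + ε`; hence the bound `2π/3` for triangulations is tight. -/
theorem stmt7 (ε : ℝ) (hε : 0 < ε) (n : ℕ) (hn : 4 ≤ n) :
    ∃ S : Finset Pt, S.card = n ∧ GenPos S ∧
      ∀ T : PSLG S, T.IsTriangulation →
        ∃ p ∈ S, ∀ φ : ℝ, VertexOpen T p φ → φ ≤ 2 * Real.pi / 3 + ε := by
  have hn0 : (0 : ℝ) < 8 * n := by positivity
  set P : Finset ℝ := (Finset.range (n - 3)).image fun k : ℕ => (k : ℝ) / (8 * n)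
  have hP : ∀ s ∈ P, s ∈ Set.Icc (0 : ℝ) (1 / 8) := by
    simp only [P, Finset.mem_image, Finset.mem_range]
    rintro _ ⟨k, hk, rfl⟩
    have hkn : (k : ℝ) ≤ n := by exact_mod_cast (by omega : k ≤ n)
    exact ⟨by positivity, by rw [div_le_iff₀ hn0]; linarith⟩
  have hP0 : (0 : ℝ) ∈ P := Finset.mem_image.2 ⟨0, Finset.mem_range.2 (by omega), by simp⟩
  have hcard : P.card = n - 3 := by
    rw [Finset.card_image_of_injective _
      fun a b h => Nat.cast_injective ((div_left_inj' hn0.ne').1 h), Finset.card_range]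
  refine ⟨config P, by rw [card_config fun s hs => (hP s hs).1, hcard]; omega, genPos_config hP,
    fun T hT => ⟨0, zero_mem_config P, fun φ ⟨d, hd, hangle⟩ => ?_⟩⟩
  obtain ⟨u, hu, hdu⟩ := exists_two_pi_div_three_le_angle hd
  have hφ := hangle u (hT.zero_cubeRoots_mem_E hP hP0 u hu)
  rw [sub_zero] at hφ
  linarith
end

section
/- For every ε > 0 there exists a finite point set S in general position such that every connected plane straight-line graph on S (in particular every plane spanning tree) has some vertex whose maximum incident angle is at most 5π/3 + ε. -/
open scoped Classical
open EuclideanGeometry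

/-! The three vertices of an equilateral triangle already work. A connected graph on three points
has a vertex adjacent to both others; the two edges there meet at angle `π / 3`, so by the triangle
inequality for angles no cone containing both directions has half-angle below `π / 6`, and the
maximum incident angle at that vertex is at most `2π - π / 3 = 5π / 3`. -/

open Real Finset

theorem VertexOpen.le_two_pi_sub_angle {S : Finset Pt} {G : PSLG S} {p q r : Pt} {φ : ℝ}
    (hφ : VertexOpen G p φ) (hq : (p, q) ∈ G.E) (hr : (p, r) ∈ G.E) :
    φ ≤ 2 * π - ∠ q p r := by
  obtain ⟨d, -, hd⟩ := hφ
  have h : ∠ q p r ≤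
      InnerProductGeometry.angle d (q - p) + InnerProductGeometry.angle d (r - p) := by
    rw [InnerProductGeometry.angle_comm d]
    exact InnerProductGeometry.angle_le_angle_add_angle _ _ _
  linarith [hd q hq, hd r hr]

theorem PSLG.Connected.exists_adj {S : Finset Pt} {G : PSLG S} (hG : G.Connected)
    {x y : Pt} (hx : x ∈ S) (hy : y ∈ S) (hxy : x ≠ y) : ∃ z, (x, z) ∈ G.E := by
  rcases (hG x hx y hy).cases_head with h | ⟨z, hz, -⟩
  · exact absurd h hxy
  · exact ⟨z, hz⟩

theorem Fin.exists_rel_rel_of_symm {R : Fin 3 → Fin 3 → Prop} (hR : ∀ i j, R i j → R j i)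
    (h : ∀ i, ∃ j ≠ i, R i j) : ∃ i j k, i ≠ j ∧ i ≠ k ∧ j ≠ k ∧ R i j ∧ R i k := by
  obtain ⟨j₀, h₀, r₀⟩ := h 0
  fin_cases j₀
  · exact absurd rfl h₀
  · obtain ⟨j₂, h₂, r₂⟩ := h 2
    fin_cases j₂
    · exact ⟨0, 1, 2, by decide, by decide, by decide, r₀, hR _ _ r₂⟩
    · exact ⟨1, 0, 2, by decide, by decide, by decide, hR _ _ r₀, hR _ _ r₂⟩
    · exact absurd rfl h₂
  · obtain ⟨j₁, h₁, r₁⟩ := h 1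
    fin_cases j₁
    · exact ⟨0, 2, 1, by decide, by decide, by decide, r₀, hR _ _ r₁⟩
    · exact absurd rfl h₁
    · exact ⟨2, 0, 1, by decide, by decide, by decide, hR _ _ r₀, hR _ _ r₁⟩

theorem PSLG.Connected.exists_adj_adj {f : Fin 3 → Pt} (hf : Function.Injective f)
    {G : PSLG (univ.image f)} (hG : G.Connected) :
    ∃ i j k, i ≠ j ∧ i ≠ k ∧ j ≠ k ∧ (f i, f j) ∈ G.E ∧ (f i, f k) ∈ G.E := by
  refine Fin.exists_rel_rel_of_symm (fun i j h => G.symm _ h) fun i => ?_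
  obtain ⟨j, hji⟩ := exists_ne i
  obtain ⟨z, hz⟩ := hG.exists_adj (mem_image_of_mem f (mem_univ i))
    (mem_image_of_mem f (mem_univ j)) (hf.ne hji.symm)
  obtain ⟨k, -, rfl⟩ := mem_image.mp (G.endpts _ hz).2
  exact ⟨k, fun hki => G.ne _ hz (hki ▸ rfl), hz⟩

theorem Affine.Simplex.genPos_image (t : Affine.Triangle ℝ Pt) :
    GenPos (univ.image t.points) := by
  simp only [GenPos, mem_image, mem_univ, true_and, forall_exists_index, forall_apply_eq_imp_iff]
  intro i j k hij hik hjk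
  exact (affineIndependent_iff_not_collinear_of_ne (ne_of_apply_ne _ hij) (ne_of_apply_ne _ hik)
    (ne_of_apply_ne _ hjk)).mp t.independent

theorem not_collinear_of_dist_eq {V P : Type*} [SeminormedAddCommGroup V] [NormedSpace ℝ V]
    [PseudoMetricSpace P] [NormedAddTorsor V P] {a b c : P} {r : ℝ}
    (hab : dist a b = r) (hbc : dist b c = r) (hca : dist c a = r) (hr : r ≠ 0) :
    ¬Collinear ℝ ({a, b, c} : Set P) := fun h => by
  rcases h.wbtw_or_wbtw_or_wbtw with h | h | h <;>
  · have := h.dist_add_dist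
    simp only [dist_comm a c, dist_comm b a, dist_comm c b, hab, hbc, hca] at this
    exact hr (by linarith)

theorem exists_equilateral_triangle : ∃ t : Affine.Triangle ℝ Pt, t.Equilateral := by
  set a : Pt := !₂[0, 0]
  set b : Pt := !₂[1, 0]
  set c : Pt := !₂[1 / 2, √3 / 2]
  have hab : dist a b = 1 := by simp [a, b, EuclideanSpace.dist_eq]
  have hbc : dist b c = 1 := by norm_num [b, c, EuclideanSpace.dist_eq, Real.dist_eq, div_pow]
  have hca : dist c a = 1 := by norm_num [a, c, EuclideanSpace.dist_eq, div_pow]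
  refine ⟨⟨![a, b, c], affineIndependent_iff_not_collinear_set.mpr
    (not_collinear_of_dist_eq hab hbc hca one_ne_zero)⟩, ?_⟩
  rw [Affine.Triangle.equilateral_iff_dist_01_eq_02_and_dist_01_eq_12]
  exact ⟨hab.trans ((dist_comm c a).symm.trans hca).symm, hab.trans hbc.symm⟩

/-- For every `ε > 0` there is a finite point set in general position on which every
connected plane straight-line graph has a vertex whose maximum incident angle is at most
`5π/3 + ε`. -/
theorem stmt9 (ε : ℝ) (hε : 0 < ε) :
    ∃ S : Finset Pt, S.Nonempty ∧ GenPos S ∧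
      ∀ G : PSLG S, G.Connected →
        ∃ p ∈ S, ∀ φ : ℝ, VertexOpen G p φ → φ ≤ 5 * Real.pi / 3 + ε := by
  obtain ⟨t, ht⟩ := exists_equilateral_triangle
  refine ⟨univ.image t.points, univ_nonempty.image _, t.genPos_image, fun G hG => ?_⟩
  obtain ⟨i, j, k, hij, hik, hjk, hj, hk⟩ := hG.exists_adj_adj t.independent.injective
  refine ⟨t.points i, mem_image_of_mem _ (mem_univ i), fun φ hφ => ?_⟩
  have := hφ.le_two_pi_sub_angle hj hk
  rw [ht.angle_eq_pi_div_three hij.symm hjk hik] at this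
  linarith
end
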